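/- Symplecticity of the exact Hamiltonian flow: Let H : ℝ^{2n} → ℝ be C² and let φ : ℝ × ℝ^{2n} → ℝ^{2n} be a C² map satisfying φ(0, y) = y and ∂φ/∂t(t, y) = J⁻¹∇H(φ(t, y)) for all t ∈ ℝ and y ∈ ℝ^{2n}. Then for every t and y, the Jacobian with respect to y satisfies D_yφ(t, y)ᵀ · J · D_yφ(t, y) = J; i.e. the time-t flow map is symplectic. -/

import Mathlib

/-! The Jacobian `F t = D_yφ(t, y)` solves the variational equation `F' = A F`, where
`A = J⁻¹ ∇²H(φ(t, y))`; this follows by exchanging the `t`- and `y`-derivatives of `φ`, i.e. from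
the symmetry of its second derivative. The Hessian being symmetric, `A` is Hamiltonian:
`Aᵀ J + J A = 0`. Hence `(Fᵀ J F)' = Fᵀ (Aᵀ J + J A) F = 0`, and `Fᵀ J F = J` because `F 0 = 1`. -/

open Matrix

noncomputable section

/-- Phase space ℝ^{2n}, with coordinates indexed by `Fin n ⊕ Fin n`
(`Sum.inl` = momentum coordinates `p`, `Sum.inr` = position coordinates `q`). -/
abbrev Phase (n : ℕ) := EuclideanSpace ℝ (Fin n ⊕ Fin n)

def toPhase {n : ℕ} (v : (Fin n ⊕ Fin n) → ℝ) : Phase n := WithLp.toLp 2 v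

def ofPhase {n : ℕ} (y : Phase n) : (Fin n ⊕ Fin n) → ℝ := y

/-- The canonical symplectic matrix `J = [[0, I], [-I, 0]]`. -/
def J (n : ℕ) : Matrix (Fin n ⊕ Fin n) (Fin n ⊕ Fin n) ℝ :=
  Matrix.fromBlocks 0 1 (-1) 0

/-- The symplectic gradient (Hamiltonian vector field) `J⁻¹ ∇H`. -/
def sympGrad {n : ℕ} (H : Phase n → ℝ) (y : Phase n) : Phase n :=
  toPhase ((J n)⁻¹.mulVec (ofPhase (gradient H y)))

/-- The Jacobian matrix of a map on phase space. -/
def jacMatrix {n : ℕ} (f : Phase n → Phase n) (y : Phase n) :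
    Matrix (Fin n ⊕ Fin n) (Fin n ⊕ Fin n) ℝ :=
  Matrix.of fun i j => ofPhase (fderiv ℝ f y (EuclideanSpace.single j 1)) i

lemma J_eq_neg_matrixJ (n : ℕ) : J n = -Matrix.J (Fin n) ℝ := by
  simp [_root_.J, Matrix.J, fromBlocks_neg]

lemma transpose_J (n : ℕ) : (J n)ᵀ = -J n := by
  rw [J_eq_neg_matrixJ, transpose_neg, Matrix.J_transpose]

lemma J_mul_J (n : ℕ) : J n * J n = -1 := by
  rw [J_eq_neg_matrixJ, neg_mul_neg, Matrix.J_squared]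

lemma inv_J (n : ℕ) : (J n)⁻¹ = -J n :=
  inv_eq_right_inv (by rw [Matrix.mul_neg, J_mul_J, neg_neg])

lemma transpose_mul_J_add_J_mul_of_isSymm {n : ℕ}
    {S : Matrix (Fin n ⊕ Fin n) (Fin n ⊕ Fin n) ℝ} (hS : S.IsSymm) :
    ((J n)⁻¹ * S)ᵀ * J n + J n * ((J n)⁻¹ * S) = 0 := by
  rw [inv_J, transpose_mul, transpose_neg, transpose_J, hS.eq, neg_neg, Matrix.mul_assoc,
    J_mul_J]
  simp [← Matrix.mul_assoc, J_mul_J]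

lemma toEuclideanCLM_jacMatrix {n : ℕ} (f : Phase n → Phase n) (y : Phase n) :
    toEuclideanCLM (𝕜 := ℝ) (jacMatrix f y) = fderiv ℝ f y := by
  apply ContinuousLinearMap.coe_injective
  refine (EuclideanSpace.basisFun _ ℝ).toBasis.ext fun j => ?_
  ext i
  simp [jacMatrix, ofPhase, mulVec, dotProduct]

lemma jacMatrix_id {n : ℕ} (y : Phase n) : jacMatrix id y = 1 :=
  EquivLike.injective (toEuclideanCLM (𝕜 := ℝ)) <| by
    rw [toEuclideanCLM_jacMatrix, fderiv_id, map_one]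
    rfl

-- `toDual` is only conjugate-linear; over `ℝ` its inverse is an `ℝ`-linear map, so it can be
-- differentiated through.
def rieszCLM (E : Type*) [NormedAddCommGroup E] [InnerProductSpace ℝ E] [CompleteSpace E] :
    StrongDual ℝ E →L[ℝ] E where
  toFun := (InnerProductSpace.toDual ℝ E).symm
  map_add' := map_add _
  map_smul' c ℓ := by simp
  cont := (InnerProductSpace.toDual ℝ E).symm.continuous

lemma rieszCLM_euclideanSpace_apply {ι : Type*} [Fintype ι] [DecidableEq ι]
    (ℓ : StrongDual ℝ (EuclideanSpace ℝ ι)) (k : ι) :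
    rieszCLM (EuclideanSpace ℝ ι) ℓ k = ℓ (EuclideanSpace.single k 1) := by
  rw [← InnerProductSpace.toDual_symm_apply (𝕜 := ℝ), real_inner_comm,
    EuclideanSpace.inner_single_left]
  simp [rieszCLM]

lemma hasFDerivAt_gradient {E : Type*} [NormedAddCommGroup E] [InnerProductSpace ℝ E]
    [CompleteSpace E] {H : E → ℝ} (hH : ContDiff ℝ 2 H) (x : E) :
    HasFDerivAt (gradient H) ((rieszCLM E).comp (fderiv ℝ (fderiv ℝ H) x)) x :=
  (rieszCLM E).hasFDerivAt.comp x
    ((hH.fderiv_right one_add_one_eq_two.le).differentiable one_ne_zero x).hasFDerivAt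

lemma isSymm_jacMatrix_gradient {n : ℕ} {H : Phase n → ℝ} (hH : ContDiff ℝ 2 H)
    (x : Phase n) : (jacMatrix (gradient H) x).IsSymm := by
  refine IsSymm.ext fun i j => ?_
  simp only [jacMatrix, ofPhase, of_apply, (hasFDerivAt_gradient hH x).fderiv,
    ContinuousLinearMap.comp_apply, rieszCLM_euclideanSpace_apply]
  exact hH.contDiffAt.isSymmSndFDerivAt (by simp) _ _

lemma hasFDerivAt_sympGrad {n : ℕ} {H : Phase n → ℝ} (hH : ContDiff ℝ 2 H) (x : Phase n) :
    HasFDerivAt (sympGrad H)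
      ((toEuclideanCLM (𝕜 := ℝ) (J n)⁻¹).comp (fderiv ℝ (gradient H) x)) x := by
  rw [(hasFDerivAt_gradient hH x).fderiv]
  exact (toEuclideanCLM (𝕜 := ℝ) (J n)⁻¹).hasFDerivAt.comp x (hasFDerivAt_gradient hH x)

lemma jacMatrix_sympGrad {n : ℕ} {H : Phase n → ℝ} (hH : ContDiff ℝ 2 H) (x : Phase n) :
    jacMatrix (sympGrad H) x = (J n)⁻¹ * jacMatrix (gradient H) x :=
  EquivLike.injective (toEuclideanCLM (𝕜 := ℝ)) <| by
    rw [map_mul, toEuclideanCLM_jacMatrix, toEuclideanCLM_jacMatrix,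
      (hasFDerivAt_sympGrad hH x).fderiv]
    rfl

lemma transpose_mul_J_add_J_mul_jacMatrix_sympGrad {n : ℕ} {H : Phase n → ℝ}
    (hH : ContDiff ℝ 2 H) (x : Phase n) :
    (jacMatrix (sympGrad H) x)ᵀ * J n + J n * jacMatrix (sympGrad H) x = 0 := by
  rw [jacMatrix_sympGrad hH]
  exact transpose_mul_J_add_J_mul_of_isSymm (isSymm_jacMatrix_gradient hH x)

section Flow

variable {E : Type*} [NormedAddCommGroup E] [NormedSpace ℝ E] {X : E → E} {φ : ℝ × E → E}

lemma fderiv_apply_one_zero_eq (hφ : Differentiable ℝ φ)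
    (hflow : ∀ t y, HasDerivAt (fun s => φ (s, y)) (X (φ (t, y))) t) (p : ℝ × E) :
    fderiv ℝ φ p (1, 0) = X (φ p) :=
  ((hφ p).hasFDerivAt.comp_hasDerivAt p.1
    ((hasDerivAt_id p.1).prodMk (hasDerivAt_const p.1 p.2))).unique (hflow p.1 p.2)

lemma fderiv_fderiv_apply_one_zero_eq (hφ : ContDiff ℝ 2 φ) (hX : Differentiable ℝ X)
    (hflow : ∀ t y, HasDerivAt (fun s => φ (s, y)) (X (φ (t, y))) t) (p w : ℝ × E) :
    fderiv ℝ (fderiv ℝ φ) p w (1, 0) = fderiv ℝ X (φ p) (fderiv ℝ φ p w) := by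
  have hD2 : HasFDerivAt (fun q => fderiv ℝ φ q (1, 0))
      ((fderiv ℝ (fderiv ℝ φ) p).flip (1, 0)) p := by
    simpa using ((hφ.fderiv_right one_add_one_eq_two.le).differentiable one_ne_zero
      p).hasFDerivAt.clm_apply (hasFDerivAt_const ((1 : ℝ), (0 : E)) p)
  rw [funext (fderiv_apply_one_zero_eq (hφ.differentiable two_ne_zero) hflow)] at hD2
  exact congrArg (· w) <|
    hD2.unique ((hX (φ p)).hasFDerivAt.comp p (hφ.differentiable two_ne_zero p).hasFDerivAt)

lemma hasDerivAt_fderiv_flow (hφ : ContDiff ℝ 2 φ) (hX : Differentiable ℝ X)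
    (hflow : ∀ t y, HasDerivAt (fun s => φ (s, y)) (X (φ (t, y))) t) (t : ℝ) (y : E) :
    HasDerivAt (fun s => fderiv ℝ (fun z => φ (s, z)) y)
      ((fderiv ℝ X (φ (t, y))).comp (fderiv ℝ (fun z => φ (t, z)) y)) t := by
  have hslice : ∀ s, fderiv ℝ (fun z => φ (s, z)) y =
      (fderiv ℝ φ (s, y)).comp (ContinuousLinearMap.inr ℝ ℝ E) := fun s =>
    ((hφ.differentiable two_ne_zero (s, y)).hasFDerivAt.comp y
      (hasFDerivAt_prodMk_right s y)).fderiv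
  simp_rw [hslice]
  have hcurve : HasDerivAt (fun s => fderiv ℝ φ (s, y))
      (fderiv ℝ (fderiv ℝ φ) (t, y) (1, 0)) t :=
    ((hφ.fderiv_right one_add_one_eq_two.le).differentiable one_ne_zero
      (t, y)).hasFDerivAt.comp_hasDerivAt t ((hasDerivAt_id t).prodMk (hasDerivAt_const t y))
  convert hcurve.clm_comp (hasDerivAt_const t (ContinuousLinearMap.inr ℝ ℝ E)) using 1
  ext v
  simp [hφ.contDiffAt.isSymmSndFDerivAt (by simp) (1, 0) (0, v),
    fderiv_fderiv_apply_one_zero_eq hφ hX hflow]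

end Flow

section MatrixODE

open scoped Matrix.Norms.L2Operator

variable {ι : Type*} [Fintype ι] [DecidableEq ι]

lemma HasDerivAt.of_toEuclideanCLM {F : ℝ → Matrix ι ι ℝ} {F' : Matrix ι ι ℝ} {t : ℝ}
    (h : HasDerivAt (fun s => toEuclideanCLM (𝕜 := ℝ) (F s)) (toEuclideanCLM (𝕜 := ℝ) F') t) :
    HasDerivAt F F' t := by
  simpa [Function.comp_def] using (toEuclideanCLM (n := ι) (𝕜 := ℝ)).toAlgEquiv.toLinearEquiv
    |>.toContinuousLinearEquiv.symm.hasFDerivAt.comp_hasDerivAt t h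

lemma HasDerivAt.matrix_transpose {F : ℝ → Matrix ι ι ℝ} {F' : Matrix ι ι ℝ} {t : ℝ}
    (h : HasDerivAt F F' t) : HasDerivAt (fun s => (F s)ᵀ) F'ᵀ t :=
  (transposeLinearEquiv ι ι ℝ ℝ).toContinuousLinearEquiv.hasFDerivAt.comp_hasDerivAt t h

lemma transpose_mul_mul_eq_of_hasDerivAt {F A : ℝ → Matrix ι ι ℝ} {M : Matrix ι ι ℝ}
    (hF : ∀ t, HasDerivAt F (A t * F t) t) (hA : ∀ t, (A t)ᵀ * M + M * A t = 0) (s t : ℝ) :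
    (F s)ᵀ * M * F s = (F t)ᵀ * M * F t := by
  have hderiv : ∀ t, HasDerivAt (fun s => (F s)ᵀ * M * F s) 0 t := fun t =>
    (((hF t).matrix_transpose.mul_const M).mul (hF t)).congr_deriv <|
      calc (A t * F t)ᵀ * M * F t + (F t)ᵀ * M * (A t * F t)
          = (F t)ᵀ * ((A t)ᵀ * M + M * A t) * F t := by
            simp only [transpose_mul, Matrix.mul_add, Matrix.add_mul, Matrix.mul_assoc]
        _ = 0 := by rw [hA, Matrix.mul_zero, Matrix.zero_mul]
  exact is_const_of_deriv_eq_zero (fun t => (hderiv t).differentiableAt)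
    (fun t => (hderiv t).deriv) s t

lemma hasDerivAt_jacMatrix_flow {n : ℕ} {H : Phase n → ℝ} (hH : ContDiff ℝ 2 H)
    {φ : ℝ × Phase n → Phase n} (hφ : ContDiff ℝ 2 φ)
    (hflow : ∀ t y, HasDerivAt (fun s => φ (s, y)) (sympGrad H (φ (t, y))) t)
    (t : ℝ) (y : Phase n) :
    HasDerivAt (fun s => jacMatrix (fun z => φ (s, z)) y)
      (jacMatrix (sympGrad H) (φ (t, y)) * jacMatrix (fun z => φ (t, z)) y) t := by
  refine HasDerivAt.of_toEuclideanCLM ?_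
  simp only [map_mul, toEuclideanCLM_jacMatrix]
  exact hasDerivAt_fderiv_flow hφ (fun x => (hasFDerivAt_sympGrad hH x).differentiableAt)
    hflow t y

end MatrixODE

/-- Symplecticity of the exact Hamiltonian flow: if `φ : ℝ × ℝ^{2n} → ℝ^{2n}`
is a C² map with `φ(0, y) = y` and `∂φ/∂t(t, y) = J⁻¹∇H(φ(t, y))` for a C² Hamiltonian `H`,
then the Jacobian in `y` satisfies `D_yφ(t,y)ᵀ · J · D_yφ(t,y) = J` everywhere. -/
theorem stmt4 (n : ℕ) (H : Phase n → ℝ) (hH : ContDiff ℝ 2 H)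
    (φ : ℝ × Phase n → Phase n) (hφ : ContDiff ℝ 2 φ)
    (hinit : ∀ y : Phase n, φ (0, y) = y)
    (hflow : ∀ (t : ℝ) (y : Phase n),
      HasDerivAt (fun s => φ (s, y)) (sympGrad H (φ (t, y))) t) :
    ∀ (t : ℝ) (y : Phase n),
      (jacMatrix (fun z => φ (t, z)) y)ᵀ * J n * jacMatrix (fun z => φ (t, z)) y = J n := by
  intro t y
  have hφ₀ : (fun z => φ (0, z)) = id := funext hinit
  rw [transpose_mul_mul_eq_of_hasDerivAt (hasDerivAt_jacMatrix_flow hH hφ hflow · y)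
    (fun s => transpose_mul_J_add_J_mul_jacMatrix_sympGrad hH (φ (s, y))) t 0,
    hφ₀, jacMatrix_id]
  simp
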